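/- arXiv:1707.05874 — 3 statements merged into one kernel-verified Lean document; each statement's English description precedes it below -/
import Mathlib

section
/- Let p be a prime with p ≡ 1 (mod 3). Then -3 is a square modulo p, and consequently (-3)^{(p-1)/6} mod p is a cube root of unity in 𝔽_p^×; moreover this cube root of unity equals 1 if and only if 3 is a cube modulo p. -/
/-!
In a finite field with `q` elements, `a ≠ 0` is an `n`-th power iff `a ^ ((q - 1) / n) = 1`,
because the unit group is cyclic. A primitive cube root of unity `ω` gives `(2ω + 1)² = -3`.
Writing `p - 1 = 6m` and `c = (-3)ᵐ`, the criterion for squares gives `c³ = 1`, and the one for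
cubes gives `c² = 1` iff `-3`, equivalently `3`, is a cube; since `gcd(2, 3) = 1`, `c = 1` iff
`c² = 1`.
-/

theorem IsCyclic.pow_card_div_eq_one_iff {G : Type*} [CommGroup G] [IsCyclic G] [Finite G]
    {n : ℕ} (hn : n ∣ Nat.card G) (a : G) :
    a ^ (Nat.card G / n) = 1 ↔ ∃ b, b ^ n = a := by
  have hle : (powMonoidHom n : G →* G).range ≤ (powMonoidHom (Nat.card G / n)).ker := by
    rintro _ ⟨b, rfl⟩
    simp only [MonoidHom.mem_ker, powMonoidHom_apply, ← pow_mul, Nat.mul_div_cancel' hn,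
      pow_card_eq_one']
  have hcard : Nat.card (powMonoidHom (Nat.card G / n) : G →* G).ker
      = Nat.card (powMonoidHom n : G →* G).range := by
    rw [IsCyclic.card_powMonoidHom_ker, IsCyclic.card_powMonoidHom_range, Nat.gcd_eq_right hn,
      Nat.gcd_eq_right (Nat.div_dvd_of_dvd hn)]
  change a ∈ (powMonoidHom _).ker ↔ a ∈ (powMonoidHom n).range
  rw [Subgroup.eq_of_le_of_card_ge hle hcard.le]

theorem FiniteField.pow_card_sub_one_div_eq_one_iff {F : Type*} [Field F] [Finite F] {n : ℕ}
    (hn : n ∣ Nat.card F - 1) {a : F} (ha : a ≠ 0) :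
    a ^ ((Nat.card F - 1) / n) = 1 ↔ ∃ x, x ^ n = a := by
  rw [← Nat.card_units] at hn ⊢
  have hn0 : n ≠ 0 := ne_zero_of_dvd_ne_zero Nat.card_pos.ne' hn
  have hunits := IsCyclic.pow_card_div_eq_one_iff hn (Units.mk0 a ha)
  simp only [Units.ext_iff, Units.val_pow_eq_pow_val, Units.val_mk0, Units.val_one] at hunits
  rw [hunits]
  constructor
  · rintro ⟨b, hb⟩
    exact ⟨b, hb⟩
  · rintro ⟨x, rfl⟩
    exact ⟨Units.mk0 x (ne_zero_pow hn0 ha), rfl⟩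

theorem FiniteField.exists_sq_eq_neg_three {F : Type*} [Field F] [Finite F]
    (h3 : 3 ∣ Nat.card F - 1) : ∃ y : F, y ^ 2 = -3 := by
  rw [← Nat.card_units] at h3
  obtain ⟨ω, hω⟩ := exists_prime_orderOf_dvd_card' 3 h3
  have hprim : IsPrimitiveRoot (ω : F) 3 :=
    IsPrimitiveRoot.coe_units_iff.2 (IsPrimitiveRoot.iff_orderOf.2 hω)
  have hsum := hprim.geom_sum_eq_zero (by norm_num)
  simp only [Finset.sum_range_succ, Finset.sum_range_zero, pow_zero, pow_one, zero_add] at hsum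
  exact ⟨2 * ω + 1, by linear_combination 4 * hsum⟩

theorem exists_pow_eq_neg_iff {M : Type*} [Monoid M] [HasDistribNeg M] {n : ℕ} (hn : Odd n)
    (a : M) : (∃ x : M, x ^ n = -a) ↔ ∃ x : M, x ^ n = a :=
  ⟨fun ⟨x, hx⟩ => ⟨-x, by rw [hn.neg_pow, hx, neg_neg]⟩,
    fun ⟨x, hx⟩ => ⟨-x, by rw [hn.neg_pow, hx]⟩⟩

/-- For a prime `p ≡ 1 (mod 3)`: `-3` is a square mod `p`, `(-3)^((p-1)/6)` is a cube
root of unity in `𝔽_p^×`, and it equals `1` if and only if `3` is a cube mod `p`. -/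
theorem stmt9 (p : ℕ) (hp : p.Prime) (hp3 : p % 3 = 1) :
    (∃ y : ZMod p, y ^ 2 = -3) ∧
    ((-3 : ZMod p) ^ ((p - 1) / 6)) ^ 3 = 1 ∧
    ((-3 : ZMod p) ^ ((p - 1) / 6) = 1 ↔ ∃ x : ZMod p, x ^ 3 = 3) := by
  have := Fact.mk hp
  have hodd : p % 2 = 1 := hp.eq_two_or_odd.resolve_left (by rintro rfl; simp at hp3)
  have hcard : Nat.card (ZMod p) - 1 = 6 * ((p - 1) / 6) := by rw [Nat.card_zmod]; omega
  have hneg3 : (-3 : ZMod p) ≠ 0 := by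
    rw [neg_ne_zero, ← Nat.cast_ofNat, ne_eq, ZMod.natCast_eq_zero_iff]
    intro h
    have := Nat.le_of_dvd three_pos h
    have := hp.two_le
    omega
  have hsq : ∃ y : ZMod p, y ^ 2 = -3 := FiniteField.exists_sq_eq_neg_three (by omega)
  have hc3 : ((-3 : ZMod p) ^ ((p - 1) / 6)) ^ 3 = 1 := by
    rw [← pow_mul, show (p - 1) / 6 * 3 = (Nat.card (ZMod p) - 1) / 2 by omega]
    exact (FiniteField.pow_card_sub_one_div_eq_one_iff (by omega) hneg3).2 hsq
  have hc2 : ((-3 : ZMod p) ^ ((p - 1) / 6)) ^ 2 = 1 ↔ ∃ x : ZMod p, x ^ 3 = 3 := by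
    rw [← pow_mul, show (p - 1) / 6 * 2 = (Nat.card (ZMod p) - 1) / 3 by omega,
      FiniteField.pow_card_sub_one_div_eq_one_iff (by omega) hneg3,
      exists_pow_eq_neg_iff (by decide)]
  refine ⟨hsq, hc3, fun h => hc2.1 (by rw [h, one_pow]), fun h => ?_⟩
  exact (pow_eq_one_iff_of_coprime (by norm_num)).1 ⟨hc3, hc2.2 h⟩
end

section
/- Let E be the elliptic curve y^2 + y = 3x^3 - 1 over ℚ(ω), where ω is a primitive cube root of unity. The nine points ∞, (0, ω), (0, ω^2), (ω^i, 1), (ω^i, -2) for i = 0, 1, 2 are exactly the 3-torsion points of E, forming a group isomorphic to (ℤ/3ℤ)^2. -/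
/-!
A point `P ≠ 0` satisfies `3 • P = 0` exactly when `2 • P = -P`, i.e. when `P` is not
`2`-torsion and doubling it does not move its `X`-coordinate. On a curve `Y² + a₃Y = X³ + a₆`
the tangent slope at `(x, y)` is `3x² / (2y + a₃)` and `(2y + a₃)² = 4x³ + b₆`, which turns this
into `x (x³ + b₆) = 0`. For `Y² + 3Y = X³ - 9` we have `b₆ = -27`, so `x ∈ {0, 3, 3ω, 3ω²}`, and
each such `x` carries two values of `y`. With `0` this gives nine `3`-torsion points, hence
a bijection with `(ZMod 3)²` by counting.
-/

open Finset WeierstrassCurve.Affine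

namespace WeierstrassCurve.Affine.Point

variable {F : Type*} [Field F] {W : Affine F}

theorem three_smul_some_eq_zero_iff [DecidableEq F] {x y : F} (h : W.Nonsingular x y) :
    3 • some x y h = 0 ↔ y ≠ W.negY x y ∧ W.addX x x (W.slope x x y y) = x := by
  rw [show (3 : ℕ) • some x y h = some x y h + some x y h + some x y h by
    rw [succ_nsmul, two_nsmul], ← eq_neg_iff_add_eq_zero, neg_some]
  by_cases hy : y = W.negY x y
  · rw [add_self_of_Y_eq hy]
    exact iff_of_false (some_ne_zero _).symm fun h2 ↦ h2.1 hy
  · rw [add_self_of_Y_ne hy, some.injEq]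
    refine ⟨fun h2 ↦ ⟨hy, h2.1⟩, fun h2 ↦ ⟨h2.2, ?_⟩⟩
    simp only [addY, negAddY, h2.2, sub_self, mul_zero, zero_add]

theorem card_eq_zero_or_some_mem (S : Finset (F × F)) (hS : ∀ p ∈ S, W.Nonsingular p.1 p.2) :
    Nat.card {P : W.Point // P = 0 ∨ ∃ x y h, P = some x y h ∧ (x, y) ∈ S} = S.card + 1 := by
  let f : Option S → {P : W.Point // P = 0 ∨ ∃ x y h, P = some x y h ∧ (x, y) ∈ S}
    | none => ⟨0, .inl rfl⟩
    | Option.some p => ⟨some _ _ (hS p p.2), .inr ⟨_, _, _, rfl, p.2⟩⟩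
  have hf : Function.Bijective f := by
    refine ⟨?_, ?_⟩
    · rintro (_ | ⟨⟨x, y⟩, hp⟩) (_ | ⟨⟨x', y'⟩, hp'⟩) hff <;>
        simp_all [f, Subtype.ext_iff, some_ne_zero, (some_ne_zero _).symm]
    · rintro ⟨P, rfl | ⟨x, y, h, rfl, hp⟩⟩
      · exact ⟨none, rfl⟩
      · exact ⟨Option.some ⟨(x, y), hp⟩, rfl⟩
  rw [← Nat.card_congr (Equiv.ofBijective f hf), Finite.card_option, Nat.card_eq_finsetCard]

end WeierstrassCurve.Affine.Point

namespace WeierstrassCurve.Affine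

variable {F : Type*} [Field F] {W : WeierstrassCurve F} {x y : F}

theorem sq_two_mul_add_a₃_of_equation (ha₁ : W.a₁ = 0) (ha₂ : W.a₂ = 0) (ha₄ : W.a₄ = 0)
    (h : W.toAffine.Equation x y) : (2 * y + W.a₃) ^ 2 = 4 * x ^ 3 + W.b₆ := by
  rw [equation_iff] at h
  simp only [ha₁, ha₂, ha₄, b₆] at h ⊢
  linear_combination 4 * h

theorem nonsingular_of_equation (ha₁ : W.a₁ = 0) (ha₂ : W.a₂ = 0) (ha₄ : W.a₄ = 0)
    (h3 : (3 : F) ≠ 0) (hb₆ : W.b₆ ≠ 0) (h : W.toAffine.Equation x y) :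
    W.toAffine.Nonsingular x y := by
  refine (nonsingular_iff x y).mpr ⟨h, ?_⟩
  by_contra! hsing
  have hx : x = 0 := by simpa [ha₁, ha₂, ha₄, h3] using hsing.1
  have hy : 2 * y + W.a₃ = 0 := by
    have := hsing.2
    simp only [ha₁] at this
    linear_combination this
  apply hb₆
  linear_combination -sq_two_mul_add_a₃_of_equation ha₁ ha₂ ha₄ h + (2 * y + W.a₃) * hy -
    4 * x ^ 2 * hx

theorem three_smul_some_eq_zero_iff_of_a₁_a₂_a₄_eq_zero [DecidableEq F]
    (ha₁ : W.a₁ = 0) (ha₂ : W.a₂ = 0) (ha₄ : W.a₄ = 0) (h3 : (3 : F) ≠ 0) (hb₆ : W.b₆ ≠ 0)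
    (h : W.toAffine.Nonsingular x y) : 3 • Point.some x y h = 0 ↔ x * (x ^ 3 + W.b₆) = 0 := by
  have hsq := sq_two_mul_add_a₃_of_equation ha₁ ha₂ ha₄ h.1
  have hnegY : W.toAffine.negY x y = -y - W.a₃ := by simp [ha₁]
  rw [Point.three_smul_some_eq_zero_iff, hnegY]
  by_cases hy : y = -y - W.a₃
  · refine iff_of_false (fun h2 ↦ h2.1 hy) fun hx ↦ hb₆ ?_
    have hd : 4 * x ^ 3 + W.b₆ = 0 := by rw [← hsq]; linear_combination (2 * y + W.a₃) * hy
    rcases mul_eq_zero.mp hx with hx | hx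
    · simpa [hx] using hd
    · exact (mul_eq_zero.mp (show 3 * W.b₆ = 0 by linear_combination 4 * hx - hd)).resolve_left h3
  · have hd : 2 * y + W.a₃ ≠ 0 := fun hd ↦ hy (by linear_combination hd)
    have haddX : W.toAffine.addX x x (W.toAffine.slope x x y y) - x =
        -3 * (x * (x ^ 3 + W.b₆)) / (2 * y + W.a₃) ^ 2 := by
      rw [slope_of_Y_ne rfl (hnegY ▸ hy), hnegY]
      simp only [addX, ha₁, ha₂, ha₄]
      field_simp
      linear_combination -3 * x * (2 * y + W.a₃) ^ 2 * hsq
    rw [← sub_eq_zero, haddX]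
    simp [hy, h3, hd]

end WeierstrassCurve.Affine

namespace IsPrimitiveRoot

variable {K : Type*} [Field K] {ω : K}

theorem sq_add_self_add_one (hω : IsPrimitiveRoot ω 3) : ω ^ 2 + ω + 1 = 0 := by
  have := hω.geom_sum_eq_zero (by norm_num)
  simp only [sum_range_succ, sum_range_zero] at this
  linear_combination this

theorem mul_pow_cube (hω : IsPrimitiveRoot ω 3) (c : K) (i : ℕ) : (c * ω ^ i) ^ 3 = c ^ 3 := by
  rw [mul_pow, ← pow_mul, mul_comm i, pow_mul, hω.pow_eq_one, one_pow, mul_one]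

theorem three_ne_zero (hω : IsPrimitiveRoot ω 3) : (3 : K) ≠ 0 := by
  exact_mod_cast (hω.neZero').out

end IsPrimitiveRoot

variable {K : Type*} [Field K] {ω : K} {W : WeierstrassCurve K}

theorem b₆_of_eq (hW : W = ⟨0, 0, 3, 0, -9⟩) : W.b₆ = -27 := by
  subst hW
  norm_num [WeierstrassCurve.b₆]

theorem b₆_ne_zero_of_eq (hω : IsPrimitiveRoot ω 3) (hW : W = ⟨0, 0, 3, 0, -9⟩) : W.b₆ ≠ 0 := by
  rw [b₆_of_eq hW, show (-27 : K) = -(3 ^ 3) by norm_num]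
  exact neg_ne_zero.mpr (pow_ne_zero 3 hω.three_ne_zero)

def torsionCoords [DecidableEq K] (ω : K) : Finset (K × K) :=
  {0} ×ˢ {3 * ω, 3 * ω ^ 2} ∪ (univ.image fun i : Fin 3 ↦ 3 * ω ^ (i : ℕ)) ×ˢ {3, -6}

variable [DecidableEq K]

theorem mem_torsionCoords {x y : K} : (x, y) ∈ torsionCoords ω ↔
    (x = 0 ∧ (y = 3 * ω ∨ y = 3 * ω ^ 2)) ∨
      ∃ i : Fin 3, x = 3 * ω ^ (i : ℕ) ∧ (y = 3 ∨ y = -6) := by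
  simp [torsionCoords, eq_comm (a := x), ← exists_and_right, ← or_assoc, ← and_or_left]

theorem card_torsionCoords (hω : IsPrimitiveRoot ω 3) : #(torsionCoords ω) = 8 := by
  have h3 := hω.three_ne_zero
  have hω0 : ω ≠ 0 := hω.ne_zero (by norm_num)
  have hinj : Function.Injective fun i : Fin 3 ↦ 3 * ω ^ (i : ℕ) := fun i j hij ↦
    Fin.ext (hω.pow_inj i.2 j.2 (mul_left_cancel₀ h3 hij))
  have hωω2 : 3 * ω ≠ 3 * ω ^ 2 := fun h ↦ by
    have := hω.pow_inj (i := 1) (j := 2) (by norm_num) (by norm_num)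
      (by simpa using mul_left_cancel₀ h3 h)
    norm_num at this
  have h36 : (3 : K) ≠ -6 := fun h ↦ h3 (mul_self_eq_zero.mp (by linear_combination h))
  have hdisj : Disjoint ({0} ×ˢ {3 * ω, 3 * ω ^ 2} : Finset (K × K))
      ((univ.image fun i : Fin 3 ↦ 3 * ω ^ (i : ℕ)) ×ˢ {3, -6}) :=
    disjoint_product.mpr (.inl (by simp [h3, hω0]))
  rw [torsionCoords, card_union_of_disjoint hdisj, card_product, card_product,
    card_image_of_injective _ hinj, card_pair hωω2, card_pair h36]
  simp

theorem mem_torsionCoords_iff_of_equation (hω : IsPrimitiveRoot ω 3) {x y : K}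
    (h : y ^ 2 + 3 * y = x ^ 3 - 9) : (x, y) ∈ torsionCoords ω ↔ x * (x ^ 3 - 27) = 0 := by
  have hω2 := hω.sq_add_self_add_one
  have hω3 := hω.pow_eq_one
  rw [mem_torsionCoords]
  constructor
  · rintro (⟨rfl, -⟩ | ⟨i, rfl, -⟩)
    · ring
    · linear_combination 3 * ω ^ (i : ℕ) * hω.mul_pow_cube 3 i
  · intro hx
    rcases mul_eq_zero.mp hx with rfl | hx
    · left
      refine ⟨rfl, ?_⟩
      have : (y - 3 * ω) * (y - 3 * ω ^ 2) = 0 := by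
        linear_combination h - 3 * y * hω2 + 9 * hω3
      rcases mul_eq_zero.mp this with hy | hy
      exacts [.inl (sub_eq_zero.mp hy), .inr (sub_eq_zero.mp hy)]
    · right
      obtain ⟨i, hi, hωi⟩ := hω.eq_pow_of_pow_eq_one (ξ := x / 3)
        (by field_simp [hω.three_ne_zero]; linear_combination hx)
      refine ⟨⟨i, hi⟩, by field_simp [hω.three_ne_zero] at hωi; linear_combination -hωi, ?_⟩
      have : (y - 3) * (y + 6) = 0 := by linear_combination h + hx
      rcases mul_eq_zero.mp this with hy | hy
      exacts [.inl (sub_eq_zero.mp hy), .inr (eq_neg_of_add_eq_zero_left hy)]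

theorem equation_of_mem_torsionCoords (hω : IsPrimitiveRoot ω 3) {x y : K}
    (hxy : (x, y) ∈ torsionCoords ω) : y ^ 2 + 3 * y = x ^ 3 - 9 := by
  have hω2 := hω.sq_add_self_add_one
  rcases mem_torsionCoords.mp hxy with ⟨rfl, rfl | rfl⟩ | ⟨i, rfl, rfl | rfl⟩
  · linear_combination 9 * hω2
  · linear_combination 9 * hω2 + 9 * ω * hω.pow_eq_one
  all_goals linear_combination -hω.mul_pow_cube 3 i

theorem nonsingular_of_mem_torsionCoords (hω : IsPrimitiveRoot ω 3) (hW : W = ⟨0, 0, 3, 0, -9⟩)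
    {p : K × K} (hp : p ∈ torsionCoords ω) : W.toAffine.Nonsingular p.1 p.2 := by
  refine nonsingular_of_equation (by rw [hW]) (by rw [hW]) (by rw [hW]) hω.three_ne_zero
    (b₆_ne_zero_of_eq hω hW) ((equation_iff _ _).mpr ?_)
  subst hW
  change p.2 ^ 2 + 0 * p.1 * p.2 + 3 * p.2 = p.1 ^ 3 + 0 * p.1 ^ 2 + 0 * p.1 + -9
  linear_combination equation_of_mem_torsionCoords hω hp

theorem three_smul_eq_zero_iff_mem_torsionCoords (hω : IsPrimitiveRoot ω 3)
    (hW : W = ⟨0, 0, 3, 0, -9⟩) (P : W.toAffine.Point) :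
    3 • P = 0 ↔ P = 0 ∨ ∃ x y h, P = .some x y h ∧ (x, y) ∈ torsionCoords ω := by
  rcases P with _ | @⟨x, y, h⟩
  · exact iff_of_true (smul_zero 3) (.inl rfl)
  have heq : y ^ 2 + 3 * y = x ^ 3 - 9 := by
    have := (equation_iff x y).mp h.1
    subst hW
    linear_combination this
  rw [three_smul_some_eq_zero_iff_of_a₁_a₂_a₄_eq_zero (by rw [hW]) (by rw [hW]) (by rw [hW])
    hω.three_ne_zero (b₆_ne_zero_of_eq hω hW), b₆_of_eq hW, ← sub_eq_add_neg,
    ← mem_torsionCoords_iff_of_equation hω heq]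
  simp only [Point.some_ne_zero, false_or, Point.some.injEq]
  constructor
  · exact fun hp ↦ ⟨x, y, h, ⟨rfl, rfl⟩, hp⟩
  · rintro ⟨_, _, _, ⟨rfl, rfl⟩, hp⟩
    exact hp

open Classical in
/-- The model `Y² + 3Y = X³ - 9` is `y² + y = 3x³ - 1` under `(X, Y) = (3x, 3y)`. -/
theorem stmt11_general (K : Type) [Field K]
    (ω : K) (hω : IsPrimitiveRoot ω 3)
    (W : WeierstrassCurve K) (hW : W = ⟨0, 0, 3, 0, -9⟩) :
    (∀ P : W.toAffine.Point, 3 • P = 0 ↔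
      (P = 0 ∨ ∃ (x y : K) (h : W.toAffine.Nonsingular x y),
        P = WeierstrassCurve.Affine.Point.some x y h ∧
        ((x = 0 ∧ (y = 3 * ω ∨ y = 3 * ω ^ 2)) ∨
          (∃ i : Fin 3, x = 3 * ω ^ (i : ℕ) ∧ (y = 3 ∨ y = -6))))) ∧
    Nonempty ({P : W.toAffine.Point // 3 • P = 0} ≃ (ZMod 3 × ZMod 3)) := by
  have htorsion := three_smul_eq_zero_iff_mem_torsionCoords hω hW
  refine ⟨fun P ↦ by simp only [htorsion, mem_torsionCoords], ?_⟩
  have hcard : Nat.card {P : W.toAffine.Point // 3 • P = 0} = 9 := by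
    rw [Nat.card_congr (Equiv.subtypeEquivRight htorsion),
      WeierstrassCurve.Affine.Point.card_eq_zero_or_some_mem _
        fun _ ↦ nonsingular_of_mem_torsionCoords hω hW,
      card_torsionCoords hω]
  have : Finite {P : W.toAffine.Point // 3 • P = 0} := Nat.finite_of_card_ne_zero (by simp [hcard])
  exact Finite.card_eq.mp (by simp [hcard])

open Classical in
/-- Over `K = ℚ(ω)`, the nine points `∞, (0,ω), (0,ω²), (ωⁱ,1), (ωⁱ,-2)` (for
`i = 0,1,2`) are exactly the `3`-torsion of the elliptic curve `y² + y = 3x³ - 1`,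
a group isomorphic to `(ℤ/3ℤ)²`.  We take `K` to be the cyclotomic field `ℚ(ζ₃)`
and use the isomorphic Weierstrass model `Y² + 3Y = X³ - 9` obtained by the scaling
`(X, Y) = (3x, 3y)`, under which the listed affine points become
`(0, 3ω), (0, 3ω²), (3ωⁱ, 3), (3ωⁱ, -6)`. -/
theorem stmt11 (K : Type) [Field K] [Algebra ℚ K] (hK : Nonempty (K ≃ₐ[ℚ] CyclotomicField 3 ℚ))
    (ω : K) (hω : IsPrimitiveRoot ω 3)
    (W : WeierstrassCurve K) (hW : W = ⟨0, 0, 3, 0, -9⟩) :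
    (∀ P : W.toAffine.Point, 3 • P = 0 ↔
      (P = 0 ∨ ∃ (x y : K) (h : W.toAffine.Nonsingular x y),
        P = WeierstrassCurve.Affine.Point.some x y h ∧
        ((x = 0 ∧ (y = 3 * ω ∨ y = 3 * ω ^ 2)) ∨
          (∃ i : Fin 3, x = 3 * ω ^ (i : ℕ) ∧ (y = 3 ∨ y = -6))))) ∧
    Nonempty ({P : W.toAffine.Point // 3 • P = 0} ≃ (ZMod 3 × ZMod 3)) :=
  stmt11_general K ω hω W hW
end

section
/- Let L = ℚ(ω, ∛p) for p ≡ 1 (mod 3) prime. Then ∛2 ∉ L, i.e., 2 has no cube root in L. -/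
/-!
Let `F = ℚ(ω)`, of degree at most `2`. A cube root of `2` in `L` forces `3 ∣ [L : ℚ]`, hence
`[L : F] = 3` and `L = F(∛p)` is a cyclic Kummer extension whose Galois group is generated by
`σ : ∛p ↦ ω ∛p`. If `x³ = 2`, then `σ x / x` is a cube root of unity `ωᵏ`, so `x / ∛pᵏ` is fixed
by `σ` and lies in `F`. Its cube `2 / pᵏ` has `2`-adic valuation `1` (as `p` is odd), so it is not a
cube in `ℚ`; then `3 ∣ [F : ℚ] ≤ 2`, which is absurd.
-/

open Polynomial IntermediateField Module

section Valuation

variable {ℓ : ℕ} [Fact ℓ.Prime]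

lemma pow_ne_of_not_dvd_padicValRat {n : ℕ} {q : ℚ} (h : ¬ (n : ℤ) ∣ padicValRat ℓ q) (b : ℚ) :
    b ^ n ≠ q := by
  rintro rfl
  exact h ⟨padicValRat ℓ b, padicValRat.pow b⟩

lemma pow_ne_div_pow_of_not_dvd {n p : ℕ} (hn : n ≠ 1) (hp : ¬ ℓ ∣ p) (j : ℕ) (b : ℚ) :
    b ^ n ≠ ℓ / (p : ℚ) ^ j := by
  have hℓ : (ℓ : ℚ) ≠ 0 := Nat.cast_ne_zero.2 (Fact.out : ℓ.Prime).ne_zero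
  have hp0 : (p : ℚ) ≠ 0 := Nat.cast_ne_zero.2 (by rintro rfl; exact hp (dvd_zero ℓ))
  have hval : padicValRat ℓ (ℓ / (p : ℚ) ^ j) = 1 := by
    rw [padicValRat.div hℓ (pow_ne_zero j hp0), padicValRat.self (Fact.out : ℓ.Prime).one_lt,
      padicValRat.pow, padicValRat.of_nat, padicValNat.eq_zero_of_not_dvd hp]
    simp
  refine pow_ne_of_not_dvd_padicValRat (ℓ := ℓ) ?_ b
  rw [hval]
  exact_mod_cast Nat.dvd_one.not.2 hn

end Valuation

section FieldTheory

variable {K L : Type*} [Field K] [Field L] [Algebra K L]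

lemma finrank_adjoin_simple_le_natDegree {f : K[X]} (hf : f ≠ 0) {x : L} (hx : aeval x f = 0) :
    finrank K K⟮x⟯ ≤ f.natDegree := by
  rw [adjoin.finrank (IsAlgebraic.isIntegral ⟨f, hf, hx⟩)]
  exact natDegree_le_natDegree (minpoly.degree_le_of_ne_zero K x hf hx)

lemma finrank_adjoin_simple_le_of_pow_eq_algebraMap {n : ℕ} (hn : n ≠ 0) {a : K} {c : L}
    (hc : c ^ n = algebraMap K L a) : finrank K K⟮c⟯ ≤ n := by
  simpa [natDegree_X_pow_sub_C] using
    finrank_adjoin_simple_le_natDegree (X_pow_sub_C_ne_zero (Nat.pos_of_ne_zero hn) a)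
      (x := c) (by simp [hc])

lemma finrank_adjoin_simple_le_two_of_sq_add_self_add_one {ω : L} (hω : ω ^ 2 + ω + 1 = 0) :
    finrank K K⟮ω⟯ ≤ 2 := by
  have := finrank_adjoin_simple_le_natDegree (cyclotomic_ne_zero 3 K) (x := ω)
    (by simp [cyclotomic_three, hω])
  rwa [natDegree_cyclotomic, Nat.totient_prime Nat.prime_three] at this

lemma Nat.Prime.dvd_finrank_of_pow_eq_algebraMap [FiniteDimensional K L] {q : ℕ} (hq : q.Prime)
    {a : K} (ha : ∀ b : K, b ^ q ≠ a) {z : L} (hz : z ^ q = algebraMap K L a) :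
    q ∣ finrank K L := by
  have hmin : minpoly K z = X ^ q - C a := by
    refine (minpoly.eq_of_irreducible_of_monic (X_pow_sub_C_irreducible_of_prime hq ha) ?_
      (monic_X_pow_sub_C a hq.ne_zero)).symm
    simp [hz]
  simpa [hmin, natDegree_X_pow_sub_C] using minpoly.degree_dvd (IsIntegral.of_finite K z)

lemma Nat.Prime.finrank_eq_of_dvd_finrank {F : Type*} [Field F] [Algebra K F] [Algebra F L]
    [IsScalarTower K F L] [FiniteDimensional K L] {q : ℕ} (hq : q.Prime)
    (hdvd : q ∣ finrank K L) (hF : finrank K F < q) (hL : finrank F L ≤ q) :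
    finrank F L = q := by
  have := Module.Finite.left K F L
  have := Module.Finite.right K F L
  rw [← finrank_mul_finrank K F L] at hdvd
  rcases hq.dvd_mul.1 hdvd with h | h
  · exact absurd (Nat.le_of_dvd finrank_pos h) hF.not_ge
  · exact hL.antisymm (Nat.le_of_dvd finrank_pos h)

lemma exists_div_pow_mem_range_of_pow_eq_algebraMap [FiniteDimensional K L] {n : ℕ} [NeZero n]
    {ζ : K} (hζ : IsPrimitiveRoot ζ n) {a : K} {c : L} (hc : c ^ n = algebraMap K L a)
    (hcK : K⟮c⟯ = ⊤) (hn : finrank K L = n) {b : K} {x : L} (hx : x ^ n = algebraMap K L b) :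
    ∃ k : ℕ, x / c ^ k ∈ Set.range (algebraMap K L) := by
  subst hn
  have hK : (primitiveRoots (finrank K L) K).Nonempty :=
    ⟨ζ, (mem_primitiveRoots (NeZero.pos _)).2 hζ⟩
  have H := irreducible_X_pow_sub_C_of_root_adjoin_eq_top hc hcK
  have := isSplittingField_X_pow_sub_C_of_root_adjoin_eq_top hK hc hcK
  have := isGalois_of_isSplittingField_X_pow_sub_C hK H L
  set e := autEquivZmod H L hζ
  set σ := e.symm (Multiplicative.ofAdd 1)
  have hσ_pow (m : ℕ) : σ ^ m = e.symm (Multiplicative.ofAdd (m : ZMod (finrank K L))) := by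
    rw [← map_pow, ← ofAdd_nsmul, nsmul_one]
  have hσc : σ c = ζ • c := by
    simpa using autEquivZmod_symm_apply_natCast H L hc hζ 1
  obtain rfl | hx0 := eq_or_ne x 0
  · exact ⟨0, 0, by simp⟩
  obtain ⟨k, -, hk⟩ := (hζ.map_of_injective (algebraMap K L).injective).eq_pow_of_pow_eq_one
    (ξ := σ x / x) (by
      rw [div_pow, ← map_pow, hx, AlgEquiv.commutes, ← hx, div_self (pow_ne_zero _ hx0)])
  have hσx : σ x = algebraMap K L ζ ^ k * x := ((eq_div_iff hx0).1 hk).symm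
  have hfix : σ ∈ MulAction.stabilizer Gal(L/K) (x / c ^ k) := by
    have hζk : algebraMap K L ζ ^ k ≠ 0 :=
      pow_ne_zero _ (by simpa using hζ.ne_zero (NeZero.ne _))
    change σ (x / c ^ k) = x / c ^ k
    rw [map_div₀, map_pow, hσc, hσx, Algebra.smul_def, mul_pow, mul_div_mul_left _ _ hζk]
  refine ⟨k, (IsGalois.mem_range_algebraMap_iff_fixed _).2 fun τ => ?_⟩
  obtain ⟨m, rfl⟩ : ∃ m : ℕ, σ ^ m = τ := by
    refine ⟨(Multiplicative.toAdd (e τ)).val, ?_⟩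
    rw [hσ_pow, ZMod.natCast_zmod_val]
    exact e.symm_apply_apply τ
  exact pow_mem hfix m

lemma exists_pow_eq_div_pow_of_pow_eq_algebraMap [FiniteDimensional K L] {n : ℕ} [NeZero n]
    {ζ : K} (hζ : IsPrimitiveRoot ζ n) {a : K} {c : L} (hc : c ^ n = algebraMap K L a)
    (hcK : K⟮c⟯ = ⊤) (hn : finrank K L = n) {b : K} {x : L} (hx : x ^ n = algebraMap K L b) :
    ∃ k : ℕ, ∃ y : K, y ^ n = b / a ^ k := by
  obtain ⟨k, y, hy⟩ := exists_div_pow_mem_range_of_pow_eq_algebraMap hζ hc hcK hn hx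
  refine ⟨k, y, (algebraMap K L).injective ?_⟩
  rw [map_pow, hy, map_div₀, map_pow, div_pow, hx, ← pow_mul, mul_comm, pow_mul, hc]

lemma IntermediateField.adjoin_simple_adjoin_simple_eq_top {α β : L} (h : K⟮α, β⟯ = ⊤) :
    K⟮α⟯⟮β⟯ = ⊤ := by
  apply restrictScalars_injective K
  rw [restrictScalars_top, ← h]
  exact adjoin_simple_adjoin_simple K α β

end FieldTheory

lemma isPrimitiveRoot_three_of_sq_add_self_add_one {K : Type*} [Field K] [NeZero (3 : K)]
    {ω : K} (hω : ω ^ 2 + ω + 1 = 0) : IsPrimitiveRoot ω 3 := by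
  rw [← isRoot_cyclotomic_iff, cyclotomic_three]
  simp [hω]

/-- For `L = ℚ(ω, ∛p)` with `p ≡ 1 (mod 3)` prime, `2` has no cube root in `L`. -/
theorem stmt13 (p : ℕ) (hp : p.Prime) (hp3 : p % 3 = 1)
    (L : Type*) [Field L] [NumberField L] (ω c : L)
    (hω : ω ^ 2 + ω + 1 = 0) (hc : c ^ 3 = (p : L))
    (hgen : IntermediateField.adjoin ℚ {ω, c} = ⊤) :
    ¬ ∃ x : L, x ^ 3 = 2 := by
  rintro ⟨x, hx⟩
  have hp_odd : ¬ 2 ∣ p := by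
    have := hp.eq_two_or_odd
    omega
  have not_cube (j : ℕ) (b : ℚ) : b ^ 3 ≠ 2 / (p : ℚ) ^ j := by
    exact_mod_cast pow_ne_div_pow_of_not_dvd (ℓ := 2) (by norm_num) hp_odd j b
  have hF : finrank ℚ ℚ⟮ω⟯ ≤ 2 := finrank_adjoin_simple_le_two_of_sq_add_self_add_one hω
  have hFc : ℚ⟮ω⟯⟮c⟯ = ⊤ := adjoin_simple_adjoin_simple_eq_top hgen
  have hcF : c ^ 3 = algebraMap ℚ⟮ω⟯ L p := by simp [hc]
  have hL : finrank ℚ⟮ω⟯ L = 3 := by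
    refine Nat.prime_three.finrank_eq_of_dvd_finrank (K := ℚ) ?_ (by omega) ?_
    · exact Nat.prime_three.dvd_finrank_of_pow_eq_algebraMap (by simpa using not_cube 0)
        (z := x) (by simp [hx])
    · have := finrank_adjoin_simple_le_of_pow_eq_algebraMap three_ne_zero hcF
      rwa [hFc, finrank_top'] at this
  have hζ : IsPrimitiveRoot (AdjoinSimple.gen ℚ ω) 3 :=
    .of_map_of_injective (f := algebraMap ℚ⟮ω⟯ L) (by
      simpa using isPrimitiveRoot_three_of_sq_add_self_add_one hω) (algebraMap ℚ⟮ω⟯ L).injective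
  obtain ⟨k, y, hy⟩ := exists_pow_eq_div_pow_of_pow_eq_algebraMap hζ hcF hFc hL
    (b := 2) (x := x) (by rw [hx, map_ofNat])
  have h3F : 3 ∣ finrank ℚ ℚ⟮ω⟯ :=
    Nat.prime_three.dvd_finrank_of_pow_eq_algebraMap (not_cube k) (z := y) (by simp [hy])
  have := Nat.le_of_dvd finrank_pos h3F
  omega
end
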